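/- Let V be a finite set, let φ, φ̃ : V → ℝ take values in a compact interval [a,b] with 0 < a ≤ b < φ*, and let ν := ⊗_{v∈V} P_{φ(v)} and ν̃ := ⊗_{v∈V} P_{φ̃(v)} be the corresponding product measures on ℕ^V. Let μ be a probability measure on ℕ^V with μ ≪ ν, H(μ|ν) < ∞ and ∫ ω_v dμ < ∞ for every v ∈ V. Then H(μ|ν̃) = H(μ|ν) + Σ_{v∈V} [ (∫ ω_v dμ) · log(φ(v)/φ̃(v)) + log( Z(φ̃(v)) / Z(φ(v)) ) ]. -/

import Mathlib

/-!
The density of `ν` with respect to `ν̃` factorizes over the sites, and at a single site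
`log (P_φ(k) / P_φ̃(k)) = k log (φ/φ̃) + log (Z(φ̃)/Z(φ))`. Hence `ν = e^L ν̃` with
`L ω = Σ_v [ω_v log (φ(v)/φ̃(v)) + log (Z(φ̃(v))/Z(φ(v)))]`, the chain rule for Radon–Nikodym
derivatives gives `log dμ/dν̃ = log dμ/dν + L` `μ`-a.e., and `L` is `μ`-integrable because
the one-site means are finite.
-/

open scoped ENNReal BigOperators

/-- `g(k)! = ∏_{i=1}^k g(i)`, with `g(0)! = 1`. -/
noncomputable def gfact (g : ℕ → ℝ) (k : ℕ) : ℝ := ∏ i ∈ Finset.Icc 1 k, g i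

/-- The partition function `Z(s) = Σ_{k≥0} s^k / g(k)!`. -/
noncomputable def Zfun (g : ℕ → ℝ) (s : ℝ) : ℝ := ∑' k : ℕ, s ^ k / gfact g k

/-- `φstar` is the radius of convergence of the power series `Z`. -/
def IsConvRadius (g : ℕ → ℝ) (φstar : ℝ≥0∞) : Prop :=
  (∀ s : ℝ, 0 ≤ s → ENNReal.ofReal s < φstar →
      Summable (fun k : ℕ => s ^ k / gfact g k)) ∧
  (∀ s : ℝ, 0 ≤ s → Summable (fun k : ℕ => s ^ k / gfact g k) →
      ENNReal.ofReal s ≤ φstar)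

/-- The one-site zero range weight `P_φ({k}) = φ^k / (Z(φ) g(k)!)`. -/
noncomputable def Pzr (g : ℕ → ℝ) (φ : ℝ) (k : ℕ) : ℝ := φ ^ k / (Zfun g φ * gfact g k)

open MeasureTheory

/-- The one-site zero range measure `P_φ` on `ℕ`. -/
noncomputable def Pmeas (g : ℕ → ℝ) (φ : ℝ) : Measure ℕ :=
  Measure.count.withDensity (fun k => ENNReal.ofReal (Pzr g φ k))

open Real

section Measure

variable {α : Type*} [MeasurableSpace α]

lemma llr_eq_llr_withDensity_exp_add {μ ν : Measure α} [SigmaFinite μ] [SigmaFinite ν]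
    {f : α → ℝ} (hf : Measurable f)
    (hμν : μ ≪ ν.withDensity fun x => ENNReal.ofReal (exp (f x))) :
    llr μ ν =ᵐ[μ] fun x => llr μ (ν.withDensity fun x => ENNReal.ofReal (exp (f x))) x + f x := by
  have hμν' : μ ≪ ν := hμν.trans (withDensity_absolutelyContinuous _ _)
  filter_upwards [hμν'.ae_le (Measure.rnDeriv_mul_rnDeriv (κ := ν) hμν),
    hμν'.ae_le (Measure.rnDeriv_withDensity ν hf.exp.ennreal_ofReal), Measure.rnDeriv_pos hμν,
    hμν.ae_le (μ.rnDeriv_lt_top (ν.withDensity _))] with x hchain hdens hpos hfin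
  rw [llr, ← hchain, Pi.mul_apply, hdens, ENNReal.toReal_mul, ENNReal.toReal_ofReal (exp_pos _).le,
    log_mul (ENNReal.toReal_pos hpos.ne' hfin.ne).ne' (exp_pos _).ne', log_exp, llr]

lemma pi_withDensity_ofReal_eq_withDensity {ι : Type*} [Fintype ι] {β : ι → Type*}
    [∀ i, MeasurableSpace (β i)] [∀ i, MeasurableSingletonClass (β i)] [∀ i, Countable (β i)]
    (p q : ∀ i, β i → ℝ) (hp : ∀ i x, 0 ≤ p i x) (hq : ∀ i x, 0 < q i x) :
    Measure.pi (fun i => Measure.count.withDensity fun x => ENNReal.ofReal (p i x)) =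
      (Measure.pi fun i => Measure.count.withDensity fun x => ENNReal.ofReal (q i x)).withDensity
        fun x => ENNReal.ofReal (∏ i, p i (x i) / q i (x i)) := by
  refine Measure.ext_of_singleton fun x => ?_
  rw [withDensity_apply _ (measurableSet_singleton x), lintegral_singleton,
    ← Set.univ_pi_singleton x, Measure.pi_pi, Measure.pi_pi,
    ENNReal.ofReal_prod_of_nonneg fun i _ => div_nonneg (hp i _) (hq i _).le,
    ← Finset.prod_mul_distrib]
  refine Finset.prod_congr rfl fun i _ => ?_
  rw [withDensity_apply _ (measurableSet_singleton _), withDensity_apply _ (measurableSet_singleton _),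
    lintegral_singleton, lintegral_singleton, Measure.count_singleton, mul_one, mul_one,
    ← ENNReal.ofReal_mul (div_nonneg (hp i _) (hq i _).le), div_mul_cancel₀ _ (hq i _).ne']

end Measure

instance (g : ℕ → ℝ) (φ : ℝ) : SigmaFinite (Pmeas g φ) := SigmaFinite.withDensity_ofReal _

section ZeroRange

variable {g : ℕ → ℝ}

lemma gfact_pos (hgpos : ∀ k : ℕ, 1 ≤ k → 0 < g k) (k : ℕ) : 0 < gfact g k :=
  Finset.prod_pos fun i hi => hgpos i (Finset.mem_Icc.mp hi).1

lemma Zfun_pos (hgpos : ∀ k : ℕ, 1 ≤ k → 0 < g k) {s : ℝ} (hs : 0 ≤ s)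
    (hsum : Summable fun k : ℕ => s ^ k / gfact g k) : 0 < Zfun g s :=
  calc (0 : ℝ) < s ^ 0 / gfact g 0 := by simp [gfact]
    _ ≤ Zfun g s :=
      hsum.le_tsum 0 fun j _ => div_nonneg (pow_nonneg hs j) (gfact_pos hgpos j).le

lemma Pzr_pos (hgpos : ∀ k : ℕ, 1 ≤ k → 0 < g k) {s : ℝ} (hs : 0 < s)
    (hsum : Summable fun k : ℕ => s ^ k / gfact g k) (k : ℕ) : 0 < Pzr g s k :=
  div_pos (pow_pos hs k) (mul_pos (Zfun_pos hgpos hs.le hsum) (gfact_pos hgpos k))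

lemma log_Pzr_div_Pzr (hgpos : ∀ k : ℕ, 1 ≤ k → 0 < g k) {s t : ℝ} (hs : s ≠ 0) (ht : t ≠ 0)
    (hZs : Zfun g s ≠ 0) (hZt : Zfun g t ≠ 0) (k : ℕ) :
    log (Pzr g s k / Pzr g t k) = k * log (s / t) + log (Zfun g t / Zfun g s) := by
  have hratio : Pzr g s k / Pzr g t k = (s / t) ^ k * (Zfun g t / Zfun g s) := by
    have := (gfact_pos hgpos k).ne'
    rw [Pzr, Pzr, div_pow]
    field_simp
  rw [hratio, log_mul (pow_ne_zero _ (div_ne_zero hs ht)) (div_ne_zero hZt hZs), log_pow]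

end ZeroRange

section Product

variable {V : Type*} [Fintype V] {g : ℕ → ℝ}

/-- `log dν/dν̃` for the product zero range measures `ν = ⊗ P_{φ(v)}` and `ν̃ = ⊗ P_{φ̃(v)}`. -/
noncomputable def logDensity (g : ℕ → ℝ) (φ φt : V → ℝ) (ω : V → ℕ) : ℝ :=
  ∑ v, ((ω v : ℝ) * log (φ v / φt v) + log (Zfun g (φt v) / Zfun g (φ v)))

lemma pi_Pmeas_eq_withDensity_exp_logDensity (hgpos : ∀ k : ℕ, 1 ≤ k → 0 < g k)
    {φ φt : V → ℝ} (hφ : ∀ v, 0 < φ v) (hφt : ∀ v, 0 < φt v)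
    (hsum : ∀ v, Summable fun k : ℕ => φ v ^ k / gfact g k)
    (hsumt : ∀ v, Summable fun k : ℕ => φt v ^ k / gfact g k) :
    Measure.pi (fun v => Pmeas g (φ v)) = (Measure.pi fun v => Pmeas g (φt v)).withDensity
      fun ω => ENNReal.ofReal (exp (logDensity g φ φt ω)) := by
  have hP v := Pzr_pos hgpos (hφ v) (hsum v)
  have hPt v := Pzr_pos hgpos (hφt v) (hsumt v)
  have hdens (ω : V → ℕ) :
      ∏ v, Pzr g (φ v) (ω v) / Pzr g (φt v) (ω v) = exp (logDensity g φ φt ω) := by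
    rw [logDensity, exp_sum]
    refine Finset.prod_congr rfl fun v _ => ?_
    rw [← log_Pzr_div_Pzr hgpos (hφ v).ne' (hφt v).ne'
      (Zfun_pos hgpos (hφ v).le (hsum v)).ne' (Zfun_pos hgpos (hφt v).le (hsumt v)).ne',
      exp_log (div_pos (hP v _) (hPt v _))]
  simp_rw [← hdens]
  exact pi_withDensity_ofReal_eq_withDensity _ _ (fun v k => (hP v k).le) hPt

variable {φ φt : V → ℝ} {μ : Measure (V → ℕ)}

lemma integrable_logDensity [IsFiniteMeasure μ]
    (hmean : ∀ v, Integrable (fun ω : V → ℕ => (ω v : ℝ)) μ) :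
    Integrable (logDensity g φ φt) μ :=
  integrable_finsetSum _ fun v _ => ((hmean v).mul_const _).add (integrable_const _)

lemma integral_logDensity [IsProbabilityMeasure μ]
    (hmean : ∀ v, Integrable (fun ω : V → ℕ => (ω v : ℝ)) μ) :
    ∫ ω, logDensity g φ φt ω ∂μ = ∑ v, ((∫ ω, (ω v : ℝ) ∂μ) * log (φ v / φt v) +
      log (Zfun g (φt v) / Zfun g (φ v))) := by
  have hsite v : Integrable (fun ω : V → ℕ => (ω v : ℝ) * log (φ v / φt v) +
      log (Zfun g (φt v) / Zfun g (φ v))) μ :=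
    ((hmean v).mul_const _).add (integrable_const _)
  unfold logDensity
  rw [integral_finsetSum _ fun v _ => hsite v]
  refine Finset.sum_congr rfl fun v _ => ?_
  rw [integral_add ((hmean v).mul_const _) (integrable_const _), integral_mul_const,
    integral_const, probReal_univ, one_smul]

end Product

theorem stmt14_general {V : Type*} [Fintype V]
    (g : ℕ → ℝ)
    (hgpos : ∀ k : ℕ, 1 ≤ k → 0 < g k)
    (φstar : ℝ≥0∞) (hrad : IsConvRadius g φstar)
    (a b : ℝ) (ha : 0 < a) (hb : ENNReal.ofReal b < φstar)
    (φ φt : V → ℝ) (hφ : ∀ v, φ v ∈ Set.Icc a b) (hφt : ∀ v, φt v ∈ Set.Icc a b)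
    (μ : Measure (V → ℕ)) [IsProbabilityMeasure μ]
    (hac : μ ≪ Measure.pi (fun v => Pmeas g (φ v)))
    (hH : Integrable
      (fun ω => Real.log ((μ.rnDeriv (Measure.pi fun v => Pmeas g (φ v))) ω).toReal) μ)
    (hmean : ∀ v : V, Integrable (fun ω : V → ℕ => (ω v : ℝ)) μ) :
    μ ≪ Measure.pi (fun v => Pmeas g (φt v)) ∧
    Integrable
      (fun ω => Real.log ((μ.rnDeriv (Measure.pi fun v => Pmeas g (φt v))) ω).toReal) μ ∧
    (∫ ω, Real.log ((μ.rnDeriv (Measure.pi fun v => Pmeas g (φt v))) ω).toReal ∂μ) =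
      (∫ ω, Real.log ((μ.rnDeriv (Measure.pi fun v => Pmeas g (φ v))) ω).toReal ∂μ) +
      ∑ v : V, ((∫ ω, (ω v : ℝ) ∂μ) * Real.log (φ v / φt v) +
        Real.log (Zfun g (φt v) / Zfun g (φ v))) := by
  have hsum : ∀ s ∈ Set.Icc a b, Summable fun k : ℕ => s ^ k / gfact g k := fun s hs =>
    hrad.1 s (ha.le.trans hs.1) ((ENNReal.ofReal_le_ofReal hs.2).trans_lt hb)
  have hν := pi_Pmeas_eq_withDensity_exp_logDensity hgpos (fun v => ha.trans_le (hφ v).1)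
    (fun v => ha.trans_le (hφt v).1) (fun v => hsum _ (hφ v)) (fun v => hsum _ (hφt v))
  have hL := integrable_logDensity (g := g) (φ := φ) (φt := φt) hmean
  have hllr := llr_eq_llr_withDensity_exp_add (measurable_of_countable _) (hν ▸ hac)
  rw [← hν] at hllr
  simp only [llr_def] at hllr
  refine ⟨hac.trans (hν ▸ withDensity_absolutelyContinuous _ _), (hH.add hL).congr hllr.symm, ?_⟩
  rw [integral_congr_ae hllr, integral_add hH hL, integral_logDensity hmean]

/-- Change of reference product measure in the relative entropy: with
`ν = ⊗_v P_{φ(v)}` and `ν̃ = ⊗_v P_{φ̃(v)}`,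
`H(μ|ν̃) = H(μ|ν) + Σ_v [ (∫ ω_v dμ) log(φ(v)/φ̃(v)) + log(Z(φ̃(v))/Z(φ(v))) ]`. -/
theorem stmt14 {V : Type*} [Fintype V]
    (g : ℕ → ℝ) (hmono : Monotone g) (hg0 : g 0 = 0)
    (hgpos : ∀ k : ℕ, 1 ≤ k → 0 < g k)
    (φstar : ℝ≥0∞) (hφstar : 0 < φstar) (hrad : IsConvRadius g φstar)
    (a b : ℝ) (ha : 0 < a) (hab : a ≤ b) (hb : ENNReal.ofReal b < φstar)
    (φ φt : V → ℝ) (hφ : ∀ v, φ v ∈ Set.Icc a b) (hφt : ∀ v, φt v ∈ Set.Icc a b)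
    (μ : Measure (V → ℕ)) [IsProbabilityMeasure μ]
    (hac : μ ≪ Measure.pi (fun v => Pmeas g (φ v)))
    (hH : Integrable
      (fun ω => Real.log ((μ.rnDeriv (Measure.pi fun v => Pmeas g (φ v))) ω).toReal) μ)
    (hmean : ∀ v : V, Integrable (fun ω : V → ℕ => (ω v : ℝ)) μ) :
    μ ≪ Measure.pi (fun v => Pmeas g (φt v)) ∧
    Integrable
      (fun ω => Real.log ((μ.rnDeriv (Measure.pi fun v => Pmeas g (φt v))) ω).toReal) μ ∧
    (∫ ω, Real.log ((μ.rnDeriv (Measure.pi fun v => Pmeas g (φt v))) ω).toReal ∂μ) =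
      (∫ ω, Real.log ((μ.rnDeriv (Measure.pi fun v => Pmeas g (φ v))) ω).toReal ∂μ) +
      ∑ v : V, ((∫ ω, (ω v : ℝ) ∂μ) * Real.log (φ v / φt v) +
        Real.log (Zfun g (φt v) / Zfun g (φ v))) :=
  stmt14_general g hgpos φstar hrad a b ha hb φ φt hφ hφt μ hac hH hmean
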